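/- Define F : (0,1) → ℝ by F(t) := ∫_0^{√(−ln t)} √(e^{−2x²} − t²) dx. Then for every positive integer N and every integer k with 0 ≤ k ≤ N − 1, there exists a unique t_{N,k} ∈ (0,1) such that F(t_{N,k}) = (√π / (2N)) · (k + 1/2). Moreover t_{N,0} > t_{N,1} > ⋯ > t_{N,N−1}. -/
import Mathlib


open MeasureTheory intervalIntegral

/-- The WKB quantization integral for the Gaussian potential `A₀(x) = e^{−x²}`. -/
noncomputable def F (t : ℝ) : ℝ :=
  ∫ x in (0 : ℝ)..(Real.sqrt (-Real.log t)), Real.sqrt (Real.exp (-2 * x ^ 2) - t ^ 2)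

noncomputable def g (t x : ℝ) : ℝ := Real.sqrt (Real.exp (-2 * x ^ 2) - t ^ 2)

lemma g_cont : Continuous (Function.uncurry g) := by
  apply Real.continuous_sqrt.comp
  fun_prop

lemma g_cont1 (t : ℝ) : Continuous (g t) := by
  have := g_cont.comp (Continuous.prodMk_right t)
  exact this

lemma g_le_one (t x : ℝ) : g t x ≤ 1 := by
  rw [g, Real.sqrt_le_one]
  nlinarith [Real.exp_le_one_iff.2 (by nlinarith : (-2 : ℝ) * x ^ 2 ≤ 0), sq_nonneg t]

lemma g_lower (t x : ℝ) (ht : 0 < t) : Real.exp (-x ^ 2) - t ≤ g t x := by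
  have hexp : Real.exp (-2 * x ^ 2) = Real.exp (-x ^ 2) ^ 2 := by
    rw [← Real.exp_nat_mul]; ring_nf
  set a := Real.exp (-x ^ 2) with ha
  have ha0 : 0 < a := Real.exp_pos _
  rcases le_or_gt a t with h | h
  · calc a - t ≤ 0 := by linarith
    _ ≤ g t x := Real.sqrt_nonneg _
  · rw [g, hexp]
    rw [show a - t = Real.sqrt ((a - t) ^ 2) from (Real.sqrt_sq (by linarith)).symm]
    apply Real.sqrt_le_sqrt
    nlinarith

lemma F_eq (t A : ℝ) (ht : 0 < t) (ht1 : t < 1) (hA : Real.sqrt (-Real.log t) ≤ A) :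
    F t = ∫ x in (0:ℝ)..A, g t x := by
  set a := Real.sqrt (-Real.log t) with ha
  have ha0 : 0 ≤ a := Real.sqrt_nonneg _
  have hlog : 0 < -Real.log t := by
    have := Real.log_neg ht ht1; linarith
  have hzero : ∀ x ∈ Set.uIcc a A, g t x = 0 := by
    intro x hx
    rw [Set.uIcc_of_le hA] at hx
    have hxa : a ≤ x := hx.1
    have hx2 : -Real.log t ≤ x ^ 2 := by
      have := Real.sq_sqrt hlog.le
      nlinarith
    rw [g, Real.sqrt_eq_zero']
    have : Real.exp (-2 * x ^ 2) ≤ t ^ 2 := by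
      have h1 : (-2 : ℝ) * x ^ 2 ≤ 2 * Real.log t := by nlinarith
      calc Real.exp (-2 * x ^ 2) ≤ Real.exp (2 * Real.log t) := Real.exp_le_exp.2 h1
      _ = t ^ 2 := by
        rw [show (2:ℝ) * Real.log t = Real.log t + Real.log t by ring, Real.exp_add,
          Real.exp_log ht, sq]
    linarith
  have h2 : ∫ x in a..A, g t x = 0 := by
    rw [intervalIntegral.integral_congr hzero, intervalIntegral.integral_zero]
  have h3 := intervalIntegral.integral_add_adjacent_intervals
    ((g_cont1 t).intervalIntegrable (μ := volume) 0 a) ((g_cont1 t).intervalIntegrable a A)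
  rw [F, ← ha, h3.symm, h2, add_zero]; rfl

lemma F_strictAntiOn : StrictAntiOn F (Set.Ioo (0:ℝ) 1) := by
  intro s hs t ht hst
  set A := Real.sqrt (-Real.log s) with hA
  have hlogs : 0 < -Real.log s := by have := Real.log_neg hs.1 hs.2; linarith
  have hA0 : 0 < A := Real.sqrt_pos.2 hlogs
  have hFt : F t = ∫ x in (0:ℝ)..A, g t x := by
    apply F_eq t A ht.1 ht.2
    apply Real.sqrt_le_sqrt
    have := Real.log_le_log hs.1 hst.le
    linarith
  have hFs : F s = ∫ x in (0:ℝ)..A, g s x := F_eq s A hs.1 hs.2 le_rfl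
  rw [hFt, hFs]
  apply intervalIntegral.integral_lt_integral_of_continuousOn_of_le_of_exists_lt hA0
    (g_cont1 t).continuousOn (g_cont1 s).continuousOn
  · intro x _
    exact Real.sqrt_le_sqrt (by nlinarith [hs.1] : Real.exp (-2 * x ^ 2) - t ^ 2 ≤ Real.exp (-2 * x ^ 2) - s ^ 2)
  · refine ⟨0, Set.left_mem_Icc.2 hA0.le, ?_⟩
    have h1 : Real.exp (-2 * (0:ℝ) ^ 2) = 1 := by norm_num
    rw [g, g, h1]
    apply Real.sqrt_lt_sqrt (by nlinarith [ht.2, hs.1, ht.1])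
    nlinarith [hs.1, ht.1]

lemma F_le (t : ℝ) (ht : 0 < t) (ht1 : t < 1) : F t ≤ Real.sqrt (-Real.log t) := by
  set a := Real.sqrt (-Real.log t) with ha
  have ha0 : 0 ≤ a := Real.sqrt_nonneg _
  calc F t ≤ ∫ _ in (0:ℝ)..a, (1:ℝ) := by
        apply intervalIntegral.integral_mono_on ha0
          ((g_cont1 t).intervalIntegrable (μ := volume) 0 a) (intervalIntegrable_const (μ := volume))
        intro x _; exact g_le_one t x
    _ = a := by simp

lemma F_ge (t A : ℝ) (ht : 0 < t) (ht1 : t < 1) (hA : 0 ≤ A) :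
    (∫ x in (0:ℝ)..A, Real.exp (-x ^ 2)) - A * t ≤ F t := by
  set B := max A (Real.sqrt (-Real.log t)) with hB
  have hFB : F t = ∫ x in (0:ℝ)..B, g t x := F_eq t B ht ht1 (le_max_right _ _)
  have hsplit := intervalIntegral.integral_add_adjacent_intervals
    ((g_cont1 t).intervalIntegrable (μ := volume) 0 A) ((g_cont1 t).intervalIntegrable (μ := volume) A B)
  have h2 : 0 ≤ ∫ x in A..B, g t x :=
    intervalIntegral.integral_nonneg (le_max_left _ _) (fun x _ => Real.sqrt_nonneg _)
  have h1 : (∫ x in (0:ℝ)..A, Real.exp (-x ^ 2)) - A * t ≤ ∫ x in (0:ℝ)..A, g t x := by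
    have : (∫ x in (0:ℝ)..A, Real.exp (-x ^ 2)) - A * t
        = ∫ x in (0:ℝ)..A, (Real.exp (-x ^ 2) - t) := by
      rw [intervalIntegral.integral_sub ((by fun_prop : Continuous fun x : ℝ =>
        Real.exp (-x ^ 2)).intervalIntegrable (μ := volume) 0 A) intervalIntegrable_const]
      simp [mul_comm]
    rw [this]
    apply intervalIntegral.integral_mono_on hA
      ((by fun_prop : Continuous fun x : ℝ => Real.exp (-x ^ 2) - t).intervalIntegrable (μ := volume) 0 A)
      ((g_cont1 t).intervalIntegrable (μ := volume) 0 A)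
    intro x _; exact g_lower t x ht
  rw [hFB, ← hsplit]
  linarith

lemma F_contOn (t₀ t₁ : ℝ) (h0 : 0 < t₀) (h1 : t₁ < 1) :
    ContinuousOn F (Set.Icc t₀ t₁) := by
  set B := Real.sqrt (-Real.log t₀) with hB
  have hG : Continuous fun t => ∫ x in (0:ℝ)..B, g t x :=
    intervalIntegral.continuous_parametric_intervalIntegral_of_continuous'
      (μ := volume) g_cont 0 B
  apply hG.continuousOn.congr
  intro t ht
  apply F_eq t B (lt_of_lt_of_le h0 ht.1) (lt_of_le_of_lt ht.2 h1)
  apply Real.sqrt_le_sqrt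
  have := Real.log_le_log h0 ht.1
  linarith

lemma exists_A (c : ℝ) (hc : c < Real.sqrt Real.pi / 2) :
    ∃ A : ℝ, 0 < A ∧ c < ∫ x in (0:ℝ)..A, Real.exp (-x ^ 2) := by
  have hint : IntegrableOn (fun x => Real.exp (-x ^ 2)) (Set.Ioi 0) := by
    have := (integrable_exp_neg_mul_sq (by norm_num : (0:ℝ) < 1)).integrableOn
      (s := Set.Ioi 0)
    simpa using this
  have htend := MeasureTheory.intervalIntegral_tendsto_integral_Ioi 0 hint Filter.tendsto_id
  have hval : ∫ x in Set.Ioi (0:ℝ), Real.exp (-x ^ 2) = Real.sqrt Real.pi / 2 := by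
    have := integral_gaussian_Ioi 1
    simpa using this
  rw [hval] at htend
  obtain ⟨A, hA1, hA2⟩ :=
    ((htend.eventually (eventually_gt_nhds hc)).and (Filter.eventually_gt_atTop 0)).exists
  exact ⟨A, hA2, hA1⟩

lemma exists_unique_t (c : ℝ) (hc0 : 0 < c) (hc1 : c < Real.sqrt Real.pi / 2) :
    ∃! t : ℝ, t ∈ Set.Ioo (0:ℝ) 1 ∧ F t = c := by
  obtain ⟨A, hA0, hAc⟩ := exists_A c hc1
  set I := ∫ x in (0:ℝ)..A, Real.exp (-x ^ 2) with hI
  set tlo := min (1/2 : ℝ) ((I - c) / (2 * A)) with htlo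
  have htlo0 : 0 < tlo := lt_min (by norm_num) (div_pos (by linarith) (by linarith))
  have htlo1 : tlo < 1 := lt_of_le_of_lt (min_le_left _ _) (by norm_num)
  have hFlo : c < F tlo := by
    have h1 := F_ge tlo A htlo0 htlo1 hA0.le
    have h2 : A * tlo ≤ (I - c) / 2 := by
      have h3 : tlo ≤ (I - c) / (2 * A) := min_le_right _ _
      calc A * tlo ≤ A * ((I - c) / (2 * A)) := by nlinarith
        _ = (I - c) / 2 := by field_simp
    linarith
  set thi := Real.exp (-(c / 2) ^ 2) with hthi
  have hthi0 : 0 < thi := Real.exp_pos _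
  have hthi1 : thi < 1 := by
    rw [hthi, Real.exp_lt_one_iff]
    have : 0 < (c / 2) ^ 2 := by positivity
    linarith
  have hFhi : F thi < c := by
    have h1 := F_le thi hthi0 hthi1
    have hlog : -Real.log thi = (c / 2) ^ 2 := by rw [hthi, Real.log_exp]; ring
    rw [hlog, Real.sqrt_sq (by positivity)] at h1
    linarith
  have hlh : tlo < thi := by
    by_contra h
    push_neg at h
    rcases eq_or_lt_of_le h with he | hl
    · rw [he] at hFhi; linarith
    · have := F_strictAntiOn ⟨hthi0, hthi1⟩ ⟨htlo0, htlo1⟩ hl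
      linarith
  have hcont : ContinuousOn F (Set.Icc tlo thi) := F_contOn tlo thi htlo0 hthi1
  obtain ⟨t, htmem, htc⟩ := intermediate_value_Icc' hlh.le hcont ⟨hFhi.le, hFlo.le⟩
  have htIoo : t ∈ Set.Ioo (0:ℝ) 1 :=
    ⟨lt_of_lt_of_le htlo0 htmem.1, lt_of_le_of_lt htmem.2 hthi1⟩
  refine ⟨t, ⟨htIoo, htc⟩, ?_⟩
  rintro s ⟨hs, hsc⟩
  exact F_strictAntiOn.injOn hs htIoo (by rw [hsc, htc])


/-- For each `N ≥ 1` and `0 ≤ k ≤ N−1` there is a unique `t_{N,k} ∈ (0,1)` with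
`F(t_{N,k}) = (√π/(2N))(k + 1/2)`, and the `t_{N,k}` are strictly decreasing in `k`. -/
theorem wkb_eigenvalues_exist_unique (N : ℕ) (hN : 0 < N) :
    (∀ k : ℕ, k ≤ N - 1 →
      ∃! t : ℝ, t ∈ Set.Ioo (0 : ℝ) 1 ∧
        F t = (Real.sqrt Real.pi / (2 * N)) * (k + 1 / 2)) ∧
    (∀ k l : ℕ, k < l → l ≤ N - 1 → ∀ tk tl : ℝ,
      tk ∈ Set.Ioo (0 : ℝ) 1 → F tk = (Real.sqrt Real.pi / (2 * N)) * (k + 1 / 2) →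
      tl ∈ Set.Ioo (0 : ℝ) 1 → F tl = (Real.sqrt Real.pi / (2 * N)) * (l + 1 / 2) →
      tl < tk) := by
  have hpi : 0 < Real.sqrt Real.pi := Real.sqrt_pos.2 Real.pi_pos
  have hN0 : (0:ℝ) < N := by exact_mod_cast hN
  constructor
  · intro k hk
    have hkN : (k:ℝ) + 1 / 2 < N := by
      have : k < N := Nat.lt_of_le_pred hN hk
      have : (k:ℝ) + 1 ≤ N := by exact_mod_cast this
      linarith
    apply exists_unique_t
    · positivity
    · have h2 : Real.sqrt Real.pi / (2 * N) * ((k:ℝ) + 1 / 2)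
          < Real.sqrt Real.pi / (2 * N) * N :=
        mul_lt_mul_of_pos_left hkN (by positivity)
      have h3 : Real.sqrt Real.pi / (2 * N) * (N:ℝ) = Real.sqrt Real.pi / 2 := by
        field_simp
      linarith
  · intro k l hkl hl tk tl htk hFk htl hFl
    have hckl : Real.sqrt Real.pi / (2 * N) * ((k:ℝ) + 1 / 2)
        < Real.sqrt Real.pi / (2 * N) * ((l:ℝ) + 1 / 2) := by
      apply mul_lt_mul_of_pos_left _ (by positivity)
      have : (k:ℝ) < l := by exact_mod_cast hkl
      linarith
    by_contra h
    push_neg at h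
    rcases eq_or_lt_of_le h with he | hlt
    · rw [he, hFl] at hFk; linarith
    · have := F_strictAntiOn htk htl hlt
      rw [hFk, hFl] at this
      linarith
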